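/- Let r ≥ 1 be such that 2^r ≥ d. Then the minimal sphere covering number of ℝ^d with the ℓ^r-norm is at most 2d: the 2d points ±e_1, …, ±e_d (where e_i is the i-th standard basis vector) lie on the ℓ^r-unit sphere and the ℓ^r-unit sphere is covered by the 2d closed ℓ^r-unit balls centered at these points. -/

import Mathlib

/-!
Let `x` lie on the `ℓ^r`-unit sphere and let `t = |x i|` be a largest coordinate. Then
`1 = ∑ |x j| ^ r ≤ d t ^ r ≤ (2 t) ^ r`, so `t ≥ 1/2`. Subtracting `± e_i`, with the sign of `x i`,
replaces `|x i|` by `1 - t ≤ t` and leaves the other coordinates alone, so the new `r`-th power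
sum is `1 - t ^ r + (1 - t) ^ r ≤ 1`.
-/

open scoped BigOperators

/-- The `ℓ^r`-norm on `ℝ^d`: `‖x‖_r = (∑ i, |x i| ^ r) ^ (1/r)`. -/
noncomputable def lrNorm (d : ℕ) (r : ℝ) (x : Fin d → ℝ) : ℝ :=
  (∑ i, |x i| ^ r) ^ (1 / r)

/-- The minimal sphere covering number of `ℝ^d` for the norm `nrm`. -/
noncomputable def coverNum (d : ℕ) (nrm : (Fin d → ℝ) → ℝ) : ℕ :=
  sInf {k | ∃ a : Fin k → Fin d → ℝ, (∀ i, nrm (a i) = 1) ∧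
    ∀ x, nrm x = 1 → ∃ i, nrm (x - a i) ≤ 1}

open Finset

section SumRpow

variable {ι : Type*} [Fintype ι] {r : ℝ} {x : ι → ℝ}

lemma sum_eq_sum_sub_add_of_eq_off [DecidableEq ι] {f g : ι → ℝ} (i : ι)
    (h : ∀ j ≠ i, f j = g j) : ∑ j, f j = ∑ j, g j - g i + f i := by
  rw [← add_sum_erase _ f (mem_univ i), ← add_sum_erase _ g (mem_univ i),
    sum_congr rfl fun j hj => h j (ne_of_mem_erase hj)]
  ring

lemma abs_le_one_of_sum_abs_rpow_eq_one (hr : 0 < r) (hx : ∑ j, |x j| ^ r = 1) (i : ι) :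
    |x i| ≤ 1 := by
  have hi : |x i| ^ r ≤ 1 :=
    hx ▸ single_le_sum (f := fun j => |x j| ^ r) (fun j _ => by positivity) (mem_univ i)
  by_contra! h
  linarith [Real.one_lt_rpow h hr]

lemma half_le_abs_of_sum_abs_rpow_eq_one (hr : 0 < r) (hx : ∑ j, |x j| ^ r = 1)
    (hcard : (Fintype.card ι : ℝ) ≤ 2 ^ r) {i : ι} (hi : ∀ j, |x j| ≤ |x i|) :
    1 / 2 ≤ |x i| := by
  have key : 1 ≤ (2 * |x i|) ^ r :=
    calc 1 = ∑ j, |x j| ^ r := hx.symm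
      _ ≤ ∑ _j : ι, |x i| ^ r :=
        sum_le_sum fun j _ => Real.rpow_le_rpow (abs_nonneg _) (hi j) hr.le
      _ = Fintype.card ι * |x i| ^ r := by simp
      _ ≤ 2 ^ r * |x i| ^ r := by gcongr
      _ = (2 * |x i|) ^ r := (Real.mul_rpow zero_le_two (abs_nonneg _)).symm
  by_contra! h
  linarith [Real.rpow_lt_one (by positivity) (by linarith : 2 * |x i| < 1) hr]

lemma abs_sub_ite_one_neg_one {a : ℝ} (ha : |a| ≤ 1) :
    |a - if 0 ≤ a then 1 else -1| = 1 - |a| := by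
  split_ifs with h
  · rw [abs_of_nonneg h] at ha ⊢
    rw [abs_of_nonpos (by linarith)]
    ring
  · rw [abs_of_neg (not_le.mp h)] at ha ⊢
    rw [abs_of_nonneg (by linarith)]
    ring

lemma exists_sum_abs_sub_single_rpow_le_one [DecidableEq ι] (hr : 0 < r)
    (hx : ∑ j, |x j| ^ r = 1) (hcard : (Fintype.card ι : ℝ) ≤ 2 ^ r) :
    ∃ i, ∑ j, |(x - Pi.single i (if 0 ≤ x i then 1 else -1) : ι → ℝ) j| ^ r ≤ 1 := by
  have hne : (univ : Finset ι).Nonempty := by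
    by_contra! h
    simp [univ_eq_empty_iff.mp h] at hx
  obtain ⟨i, -, hi⟩ := exists_max_image univ (fun j => |x j|) hne
  have h_half := half_le_abs_of_sum_abs_rpow_eq_one hr hx hcard fun j => hi j (mem_univ j)
  have h_one := abs_le_one_of_sum_abs_rpow_eq_one hr hx i
  refine ⟨i, ?_⟩
  rw [sum_eq_sum_sub_add_of_eq_off (g := fun j => |x j| ^ r) i fun j hj => by simp [hj], hx]
  simp only [Pi.sub_apply, Pi.single_eq_same, abs_sub_ite_one_neg_one h_one]
  have : (1 - |x i|) ^ r ≤ |x i| ^ r := Real.rpow_le_rpow (by linarith) (by linarith) hr.le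
  linarith

end SumRpow

section LrNorm

variable {d : ℕ} {r : ℝ}

lemma lrNorm_eq_one_iff (hr : r ≠ 0) (x : Fin d → ℝ) :
    lrNorm d r x = 1 ↔ ∑ i, |x i| ^ r = 1 := by
  rw [lrNorm, one_div, Real.rpow_inv_eq (by positivity) zero_le_one hr, Real.one_rpow]

lemma lrNorm_le_one_iff (hr : 0 < r) (x : Fin d → ℝ) :
    lrNorm d r x ≤ 1 ↔ ∑ i, |x i| ^ r ≤ 1 := by
  rw [lrNorm, ← Real.rpow_le_rpow_iff (by positivity) zero_le_one hr,
    ← Real.rpow_mul (by positivity), one_div_mul_cancel hr.ne', Real.rpow_one, Real.one_rpow]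

lemma lrNorm_single (hr : r ≠ 0) (i : Fin d) (c : ℝ) : lrNorm d r (Pi.single i c) = |c| := by
  rw [lrNorm, Fintype.sum_eq_single i fun j hj => by simp [hj, Real.zero_rpow hr], one_div,
    Pi.single_eq_same, Real.rpow_rpow_inv (abs_nonneg c) hr]

lemma exists_lrNorm_sub_single_le_one (hr : 0 < r) (h2r : (d : ℝ) ≤ 2 ^ r) {x : Fin d → ℝ}
    (hx : lrNorm d r x = 1) :
    ∃ i, lrNorm d r (x - Pi.single i (if 0 ≤ x i then (1 : ℝ) else -1)) ≤ 1 := by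
  rw [lrNorm_eq_one_iff hr.ne'] at hx
  simp_rw [lrNorm_le_one_iff hr]
  exact exists_sum_abs_sub_single_rpow_le_one hr hx (by simpa using h2r)

lemma coverNum_le_card {ι : Type*} [Fintype ι] {nrm : (Fin d → ℝ) → ℝ} (a : ι → Fin d → ℝ)
    (ha : ∀ i, nrm (a i) = 1) (hcover : ∀ x, nrm x = 1 → ∃ i, nrm (x - a i) ≤ 1) :
    coverNum d nrm ≤ Fintype.card ι := by
  let a' := a ∘ (Fintype.equivFin ι).symm
  refine Nat.sInf_le ⟨a', fun k => ha _, fun x hx => ?_⟩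
  obtain ⟨i, hi⟩ := hcover x hx
  exact ⟨Fintype.equivFin ι i, by simpa [a'] using hi⟩

end LrNorm

theorem stmt5_general (d : ℕ) (r : ℝ) (hr : 1 ≤ r) (h2r : (d : ℝ) ≤ 2 ^ r) :
    let e : Fin d → Bool → Fin d → ℝ :=
      fun i b j => if j = i then (if b then 1 else -1) else 0
    (∀ i b, lrNorm d r (e i b) = 1) ∧
    (∀ x : Fin d → ℝ, lrNorm d r x = 1 → ∃ i b, lrNorm d r (x - e i b) ≤ 1) ∧
    coverNum d (lrNorm d r) ≤ 2 * d := by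
  intro e
  have hr0 : 0 < r := by linarith
  have he : ∀ i b, e i b = Pi.single i (if b then 1 else -1) := fun i b => by
    ext j
    simp [e, Pi.single_apply]
  have norm_e : ∀ i b, lrNorm d r (e i b) = 1 := fun i b => by
    rw [he, lrNorm_single hr0.ne']
    cases b <;> simp
  have cover : ∀ x, lrNorm d r x = 1 → ∃ i b, lrNorm d r (x - e i b) ≤ 1 := fun x hx => by
    obtain ⟨i, hi⟩ := exists_lrNorm_sub_single_le_one hr0 h2r hx
    exact ⟨i, decide (0 ≤ x i), by simpa [he] using hi⟩
  refine ⟨norm_e, cover, ?_⟩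
  simpa [mul_comm] using coverNum_le_card (fun p : Fin d × Bool => e p.1 p.2)
    (fun p => norm_e p.1 p.2) fun x hx => by
      obtain ⟨i, b, h⟩ := cover x hx
      exact ⟨(i, b), h⟩

/-- if `r ≥ 1` and `2^r ≥ d`, then the minimal sphere covering number of `ℝ^d`
with the `ℓ^r`-norm is at most `2d`: the `2d` points `±e_1, …, ±e_d` lie on the `ℓ^r`-unit
sphere and the `ℓ^r`-unit sphere is covered by the closed `ℓ^r`-unit balls centered at them. -/
theorem stmt5 (d : ℕ) (hd : 1 ≤ d) (r : ℝ) (hr : 1 ≤ r) (h2r : (d : ℝ) ≤ 2 ^ r) :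
    let e : Fin d → Bool → Fin d → ℝ :=
      fun i b j => if j = i then (if b then 1 else -1) else 0
    (∀ i b, lrNorm d r (e i b) = 1) ∧
    (∀ x : Fin d → ℝ, lrNorm d r x = 1 → ∃ i b, lrNorm d r (x - e i b) ≤ 1) ∧
    coverNum d (lrNorm d r) ≤ 2 * d :=
  stmt5_general d r hr h2r
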